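/- arXiv:2407.03539 — 5 statements merged into one kernel-verified Lean document; each statement's English description precedes it below -/
import Mathlib

section
/- Let J ≥ 1, let γ ∈ (0,1), and let q_y > 0 for every nonzero profile y ∈ {0,1}^J \ {0}. If the no-highest-order-interaction equation ∑_{y ≠ 0} (−1)^{J + |y|} log(q_y · γ) + (−1)^J log(1 − γ) = 0 holds, then 1/γ = 1 + exp(S(q)), where S(q) = ∑_{y ≠ 0} (−1)^{|y|+1} log q_y. -/
/-!
Write `|y|` for the number of ones of `y`. Since `log (q_y γ) = log q_y + log γ` and the signs
`(-1)^|y|` sum to `0` over all of `{0,1}^J` (hence to `-1` over the nonzero profiles), the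
interaction equation collapses to `(-1)^J (-S(q) - log γ + log (1 - γ)) = 0`, i.e.
`S(q) = log ((1 - γ) / γ)`; exponentiating gives `exp S(q) = 1/γ - 1`.
-/

open Finset

section AlternatingProfileSums

variable {ι R : Type*} [Fintype ι] [DecidableEq ι] [Nonempty ι] [CommRing R]

theorem sum_neg_one_pow_card_true_eq_zero :
    ∑ y : ι → Bool, (-1 : R) ^ (univ.filter fun k => y k = true).card = 0 := by
  have hprod (y : ι → Bool) :
      (-1 : R) ^ (univ.filter fun k => y k = true).card = ∏ k, if y k = true then -1 else 1 := by
    rw [prod_ite, prod_const, prod_const, one_pow, mul_one]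
  simp_rw [hprod]
  rw [← Fintype.prod_sum (fun (_ : ι) (b : Bool) => if b = true then (-1 : R) else 1)]
  exact prod_eq_zero (mem_univ (Classical.arbitrary ι)) (by simp)

theorem sum_ne_false_neg_one_pow_card_true :
    ∑ y ∈ univ.filter (fun y : ι → Bool => y ≠ fun _ => false),
      (-1 : R) ^ (univ.filter fun k => y k = true).card = -1 := by
  have h := sum_filter_add_sum_filter_not univ (fun y : ι → Bool => y ≠ fun _ => false)
    (fun y => (-1 : R) ^ (univ.filter fun k => y k = true).card)
  simp only [sum_neg_one_pow_card_true_eq_zero, ne_eq, not_not, filter_eq', mem_univ, if_true,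
    sum_singleton, Bool.false_eq_true, filter_false, card_empty, pow_zero] at h
  linear_combination h

end AlternatingProfileSums

theorem one_div_eq_one_add_exp_log_sub {γ : ℝ} (hγ0 : 0 < γ) (hγ1 : γ < 1) :
    1 / γ = 1 + Real.exp (Real.log (1 - γ) - Real.log γ) := by
  rw [Real.exp_sub, Real.exp_log (by linarith), Real.exp_log hγ0]
  field_simp
  ring

/-- if the no-highest-order-interaction equation
`∑_{y ≠ 0} (−1)^{J+|y|} log(q_y γ) + (−1)^J log(1−γ) = 0` holds, then
`1/γ = 1 + exp(∑_{y ≠ 0} (−1)^{|y|+1} log q_y)`. -/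
theorem stmt_2 (J : ℕ) (hJ : 1 ≤ J) (γ : ℝ) (hγ0 : 0 < γ) (hγ1 : γ < 1)
    (q : (Fin J → Bool) → ℝ)
    (hq : ∀ y : Fin J → Bool, y ≠ (fun _ => false) → 0 < q y)
    (h : ∑ y ∈ Finset.univ.filter (fun y : Fin J → Bool => y ≠ fun _ => false),
          (-1 : ℝ) ^ (J + (Finset.univ.filter (fun k => y k = true)).card)
            * Real.log (q y * γ)
        + (-1 : ℝ) ^ J * Real.log (1 - γ) = 0) :
    1 / γ = 1 + Real.exp (∑ y ∈ Finset.univ.filter (fun y : Fin J → Bool => y ≠ fun _ => false),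
      (-1 : ℝ) ^ ((Finset.univ.filter (fun k => y k = true)).card + 1) * Real.log (q y)) := by
  have : Nonempty (Fin J) := ⟨⟨0, hJ⟩⟩
  set s := univ.filter fun y : Fin J → Bool => y ≠ fun _ => false
  set S := ∑ y ∈ s, (-1 : ℝ) ^ ((univ.filter fun k => y k = true).card + 1) * Real.log (q y)
  have hterm : ∀ y ∈ s, (-1 : ℝ) ^ (J + (univ.filter fun k => y k = true).card) * Real.log (q y * γ)
      = (-1) ^ J * (-((-1) ^ ((univ.filter fun k => y k = true).card + 1) * Real.log (q y))
        + (-1) ^ (univ.filter fun k => y k = true).card * Real.log γ) := by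
    intro y hy
    rw [Real.log_mul (hq y (mem_filter.mp hy).2).ne' hγ0.ne']
    ring
  rw [sum_congr rfl hterm, ← mul_sum, sum_add_distrib, sum_neg_distrib, ← sum_mul,
    sum_ne_false_neg_one_pow_card_true] at h
  have hS : S = Real.log (1 - γ) - Real.log γ := by
    have h' : (-1 : ℝ) ^ J * (S - (Real.log (1 - γ) - Real.log γ)) = 0 := by linear_combination -h
    linear_combination (mul_eq_zero.mp h').resolve_left (pow_ne_zero J (by norm_num))
  rw [hS]
  exact one_div_eq_one_add_exp_log_sub hγ0 hγ1
end

section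
/- Let 1 ≤ J ≤ K, let 𝒳 be a finite set, and let (X,Y) be a random pair with distribution Q on 𝒳 × ({0,1}^K \ {0}). Assume q_y(x) := Q(Y = y | X = x) > 0 for every x in the support of X and every profile y = (y_1,…,y_J,0,…,0) with (y_1,…,y_J) ≠ 0. Define 1/γ(x) := 1 + exp( ∑_{(y_1,…,y_J) ≠ 0} (−1)^{|y|+1} log q_y(x) ), 1/ψ := E_Q[1/γ(X)], and φ(x,y) := (1/γ(x) − 1) ∑_{(y'_1,…,y'_J) ≠ 0} (−1)^{|y'|+1} 1(y = y') / q_{y'}(x) + 1 − 1/ψ. Then Var_Q(φ(X,Y)) = Var_Q(1/γ(X)) + E_Q[ (1/γ(X) − 1)² ( ∑_{(y_1,…,y_J) ≠ 0} 1/q_y(X) − 1 ) ]. -/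
open Finset

/-- The `K`-dimensional capture profile `(z₁, …, z_J, 0, …, 0)`. -/
def extProfile (J K : ℕ) (z : Fin J → Bool) : Fin K → Bool :=
  fun k => if h : (k : ℕ) < J then z ⟨k, h⟩ else false

/-- The set of nonzero capture profiles in `{0,1}^J`. -/
def NZ (J : ℕ) : Finset (Fin J → Bool) :=
  Finset.univ.filter (fun z => z ≠ fun _ => false)

/-- The number of ones of a binary profile. -/
def wt {n : ℕ} (y : Fin n → Bool) : ℕ := (Finset.univ.filter (fun k => y k = true)).card

/-- The identified inverse conditional capture probability
`1/γ(x) = 1 + exp(∑_{(y₁,…,y_J) ≠ 0} (−1)^{|y|+1} log q_y(x))`. -/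
noncomputable def gammaInv (J K : ℕ) (q : (Fin K → Bool) → ℝ) : ℝ :=
  1 + Real.exp (∑ z ∈ NZ J, (-1 : ℝ) ^ (wt z + 1) * Real.log (q (extProfile J K z)))

/-- The uncentered efficient influence function
`(1/γ(x) − 1) ∑_{y' ≠ 0} (−1)^{|y'|+1} 1(y = y')/q_{y'}(x) + 1`. -/
noncomputable def phiU (J K : ℕ) (q : (Fin K → Bool) → ℝ) (y : Fin K → Bool) : ℝ :=
  (gammaInv J K q - 1) *
      (∑ z ∈ NZ J, (-1 : ℝ) ^ (wt z + 1) *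
        (if y = extProfile J K z then (1 : ℝ) else 0) / q (extProfile J K z)) + 1


/-! Fix `x`. The influence function is `φ = (1/γ − 1) S + 1 − 1/ψ`, where `S(y)` is the signed,
inverse-probability-weighted indicator of the profile `y`. Conditionally on `X = x`, `S` has mean
`∑_{y ≠ 0} (−1)^{|y|+1} = 1` and second moment `∑_{y ≠ 0} 1/q_y(x)` (the indicators of distinct
profiles are orthogonal and the signs square to `1`). Hence `E[φ | X] = 1/γ(X) − 1/ψ` and
`Var(φ | X) = (1/γ(X) − 1)² (∑_{y ≠ 0} 1/q_y(X) − 1)`, and the law of total variance concludes. -/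

lemma extProfile_injective {J K : ℕ} (hJK : J ≤ K) : Function.Injective (extProfile J K) := by
  intro z z' h
  funext j
  simpa [extProfile, j.2] using congrFun h ⟨j, j.2.trans_le hJK⟩

section Signs

variable {J : ℕ}

lemma neg_one_pow_wt (z : Fin J → Bool) :
    (-1 : ℝ) ^ wt z = ∏ k, if z k = true then -1 else 1 := by
  rw [prod_ite, prod_const, prod_const, one_pow, mul_one, wt]

lemma sum_neg_one_pow_wt (hJ : 1 ≤ J) : ∑ z : Fin J → Bool, (-1 : ℝ) ^ wt z = 0 := by
  simp_rw [neg_one_pow_wt]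
  rw [← Fintype.prod_sum fun (_ : Fin J) (b : Bool) => if b = true then (-1 : ℝ) else 1]
  exact prod_eq_zero (mem_univ ⟨0, hJ⟩) (by norm_num)

lemma sum_NZ_neg_one_pow_wt_succ (hJ : 1 ≤ J) : ∑ z ∈ NZ J, (-1 : ℝ) ^ (wt z + 1) = 1 := by
  have hNZ : NZ J = univ.erase fun _ => false := by rw [NZ, filter_ne']
  have hwt0 : wt (fun _ => false : Fin J → Bool) = 0 := by simp [wt]
  have h := sum_neg_one_pow_wt hJ
  rw [← sum_erase_add _ _ (mem_univ fun _ => false), ← hNZ, hwt0, pow_zero] at h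
  simp_rw [pow_succ, ← sum_mul]
  linarith

end Signs

noncomputable def signedInvIndicator (J K : ℕ) (q : (Fin K → Bool) → ℝ) (y : Fin K → Bool) : ℝ :=
  ∑ z ∈ NZ J, (-1 : ℝ) ^ (wt z + 1) *
    (if y = extProfile J K z then (1 : ℝ) else 0) / q (extProfile J K z)

lemma phiU_eq (J K : ℕ) (q : (Fin K → Bool) → ℝ) (y : Fin K → Bool) :
    phiU J K q y = (gammaInv J K q - 1) * signedInvIndicator J K q y + 1 := rfl

section Fibre

variable {J K : ℕ} {q : (Fin K → Bool) → ℝ}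

lemma signedInvIndicator_extProfile (hJK : J ≤ K) {z : Fin J → Bool} (hz : z ∈ NZ J) :
    signedInvIndicator J K q (extProfile J K z) = (-1 : ℝ) ^ (wt z + 1) / q (extProfile J K z) := by
  simp_rw [signedInvIndicator, (extProfile_injective hJK).eq_iff, mul_ite, mul_one, mul_zero,
    ite_div, zero_div, sum_ite_eq, if_pos hz]

lemma signedInvIndicator_eq_zero {y : Fin K → Bool} (hy : y ∉ (NZ J).image (extProfile J K)) :
    signedInvIndicator J K q y = 0 := by
  refine sum_eq_zero fun z hz => ?_
  rw [if_neg fun h => hy (mem_image.2 ⟨z, hz, h.symm⟩)]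
  simp

lemma sum_mul_signedInvIndicator_pow (hJK : J ≤ K) (w : (Fin K → Bool) → ℝ) {n : ℕ}
    (hn : n ≠ 0) :
    ∑ y, w y * signedInvIndicator J K q y ^ n
      = ∑ z ∈ NZ J, w (extProfile J K z) * ((-1 : ℝ) ^ (wt z + 1) / q (extProfile J K z)) ^ n := by
  rw [← sum_subset (subset_univ _) fun y _ hy => by
      rw [signedInvIndicator_eq_zero hy, zero_pow hn, mul_zero],
    sum_image fun z _ z' _ h => extProfile_injective hJK h]
  exact sum_congr rfl fun z hz => by rw [signedInvIndicator_extProfile hJK hz]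

/- In the lemmas below `w = Q(x, ·)` is the joint mass of a fibre and `q = Q(· | x)` the
conditional law; `hwq` says that joint divided by conditional is the marginal. -/
variable {w : (Fin K → Bool) → ℝ}

lemma sum_mul_signedInvIndicator
    (hJ : 1 ≤ J) (hJK : J ≤ K)
    (hwq : ∀ z ∈ NZ J, w (extProfile J K z) / q (extProfile J K z) = ∑ y, w y) :
    ∑ y, w y * signedInvIndicator J K q y = ∑ y, w y := by
  have h := sum_mul_signedInvIndicator_pow (q := q) hJK w one_ne_zero
  simp_rw [pow_one] at h
  calc ∑ y, w y * signedInvIndicator J K q y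
      = ∑ z ∈ NZ J, (-1 : ℝ) ^ (wt z + 1) * ∑ y, w y :=
        h.trans (sum_congr rfl fun z hz => by rw [← hwq z hz]; ring)
    _ = ∑ y, w y := by rw [← sum_mul, sum_NZ_neg_one_pow_wt_succ hJ, one_mul]

lemma sum_mul_signedInvIndicator_sq
    (hJK : J ≤ K)
    (hwq : ∀ z ∈ NZ J, w (extProfile J K z) / q (extProfile J K z) = ∑ y, w y) :
    ∑ y, w y * signedInvIndicator J K q y ^ 2
      = (∑ y, w y) * ∑ z ∈ NZ J, 1 / q (extProfile J K z) := by
  rw [sum_mul_signedInvIndicator_pow hJK w two_ne_zero, mul_sum]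
  refine sum_congr rfl fun z hz => ?_
  rw [← hwq z hz, div_pow, ← pow_mul, pow_mul', neg_one_sq, one_pow]
  ring

lemma sum_mul_phiU_sub
    (hJ : 1 ≤ J) (hJK : J ≤ K)
    (hwq : ∀ z ∈ NZ J, w (extProfile J K z) / q (extProfile J K z) = ∑ y, w y) (c : ℝ) :
    ∑ y, w y * (phiU J K q y - c) = (∑ y, w y) * (gammaInv J K q - c) := by
  have h : ∀ y, w y * (phiU J K q y - c)
      = (gammaInv J K q - 1) * (w y * signedInvIndicator J K q y) + (1 - c) * w y := fun y => by
    rw [phiU_eq]; ring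
  rw [sum_congr rfl fun y _ => h y, sum_add_distrib, ← mul_sum, ← mul_sum,
    sum_mul_signedInvIndicator hJ hJK hwq]
  ring

lemma sum_mul_phiU_sub_sq
    (hJ : 1 ≤ J) (hJK : J ≤ K)
    (hwq : ∀ z ∈ NZ J, w (extProfile J K z) / q (extProfile J K z) = ∑ y, w y) (c : ℝ) :
    ∑ y, w y * (phiU J K q y - c) ^ 2
      = (∑ y, w y) * ((gammaInv J K q - c) ^ 2 +
          (gammaInv J K q - 1) ^ 2 * ((∑ z ∈ NZ J, 1 / q (extProfile J K z)) - 1)) := by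
  have h : ∀ y, w y * (phiU J K q y - c) ^ 2
      = (gammaInv J K q - 1) ^ 2 * (w y * signedInvIndicator J K q y ^ 2)
        + 2 * (gammaInv J K q - 1) * (1 - c) * (w y * signedInvIndicator J K q y)
        + (1 - c) ^ 2 * w y := fun y => by
    rw [phiU_eq]; ring
  rw [sum_congr rfl fun y _ => h y, sum_add_distrib, sum_add_distrib, ← mul_sum, ← mul_sum,
    ← mul_sum, sum_mul_signedInvIndicator hJ hJK hwq, sum_mul_signedInvIndicator_sq hJK hwq]
  ring

end Fibre

/- When the marginal vanishes, `q = w / 0 = 0` and both sides are `0`. -/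
lemma div_cond_eq_marginal {ι : Type*} [Fintype ι] {w q : ι → ℝ} (hw : ∀ y, 0 ≤ w y)
    (hq : ∀ y, q y = w y / ∑ y', w y') {y : ι} (hy : 0 < ∑ y', w y' → 0 < q y) :
    w y / q y = ∑ y', w y' := by
  rcases (sum_nonneg fun y' _ => hw y').eq_or_lt with hp | hp
  · rw [hq, ← hp, div_zero, div_zero]
  · have hqy := hy hp
    rw [hq] at hqy ⊢
    have hwy : w y ≠ 0 := fun h => by simp [h] at hqy
    field_simp

section Variance

variable {ι κ : Type*} [Fintype ι] [Fintype κ]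

lemma sum_mul_sub_sq_sub_sq (m G : ι → ℝ) (hm : ∑ i, m i = 1) (c : ℝ) :
    (∑ i, m i * (G i - c) ^ 2) - (∑ i, m i * (G i - c)) ^ 2
      = (∑ i, m i * G i ^ 2) - (∑ i, m i * G i) ^ 2 := by
  have h1 : ∑ i, m i * (G i - c) = ∑ i, m i * G i - c * ∑ i, m i := by
    rw [mul_sum, ← sum_sub_distrib]; exact sum_congr rfl fun i _ => by ring
  have h2 : ∑ i, m i * (G i - c) ^ 2
      = ∑ i, m i * G i ^ 2 - 2 * c * ∑ i, m i * G i + c ^ 2 * ∑ i, m i := by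
    rw [mul_sum, mul_sum, ← sum_sub_distrib, ← sum_add_distrib]
    exact sum_congr rfl fun i _ => by ring
  rw [h1, h2, hm]
  ring

lemma sum_sum_variance_eq (Q : ι → κ → ℝ) (F : ι → κ → ℝ) (G V : ι → ℝ)
    (hmean : ∀ i, ∑ j, Q i j * F i j = (∑ j, Q i j) * G i)
    (hsq : ∀ i, ∑ j, Q i j * F i j ^ 2 = (∑ j, Q i j) * (G i ^ 2 + V i)) :
    (∑ i, ∑ j, Q i j * F i j ^ 2) - (∑ i, ∑ j, Q i j * F i j) ^ 2
      = ((∑ i, (∑ j, Q i j) * G i ^ 2) - (∑ i, (∑ j, Q i j) * G i) ^ 2)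
        + ∑ i, (∑ j, Q i j) * V i := by
  simp only [hmean, hsq, mul_add, sum_add_distrib]
  ring

end Variance

theorem stmt_8_general (J K : ℕ) (hJ : 1 ≤ J) (hJK : J ≤ K)
    {𝒳 : Type*} [Fintype 𝒳]
    (Q : 𝒳 → (Fin K → Bool) → ℝ)
    (hQnn : ∀ x y, 0 ≤ Q x y) (hQsum : ∑ x, ∑ y, Q x y = 1)
    (q : (Fin K → Bool) → 𝒳 → ℝ)
    (hq : ∀ y x, q y x = Q x y / ∑ y', Q x y')
    (hqpos : ∀ x, 0 < ∑ y', Q x y' → ∀ z ∈ NZ J, 0 < q (extProfile J K z) x)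
    (ψinv : ℝ)
    (φ : 𝒳 → (Fin K → Bool) → ℝ)
    (hφ : ∀ x y, φ x y = phiU J K (fun y' => q y' x) y - ψinv) :
    (∑ x, ∑ y, Q x y * φ x y ^ 2) - (∑ x, ∑ y, Q x y * φ x y) ^ 2
      = ((∑ x, (∑ y', Q x y') * gammaInv J K (fun y => q y x) ^ 2)
          - (∑ x, (∑ y', Q x y') * gammaInv J K (fun y => q y x)) ^ 2)
        + ∑ x, (∑ y', Q x y') *
            ((gammaInv J K (fun y => q y x) - 1) ^ 2 *
              ((∑ z ∈ NZ J, 1 / q (extProfile J K z) x) - 1)) := by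
  have hwq : ∀ x, ∀ z ∈ NZ J, Q x (extProfile J K z) / q (extProfile J K z) x = ∑ y, Q x y :=
    fun x z hz => div_cond_eq_marginal (hQnn x) (fun y => hq y x) fun hp => hqpos x hp z hz
  simp only [hφ]
  rw [sum_sum_variance_eq Q _ (fun x => gammaInv J K (fun y => q y x) - ψinv) _
      (fun x => sum_mul_phiU_sub hJ hJK (hwq x) ψinv)
      (fun x => sum_mul_phiU_sub_sq hJ hJK (hwq x) ψinv),
    sum_mul_sub_sq_sub_sq _ _ hQsum]

/-- efficiency bound: the variance of the efficient influence function is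
`Var_Q(φ(X,Y)) = Var_Q(1/γ(X)) + E_Q[(1/γ(X) − 1)² (∑_{y ≠ 0} 1/q_y(X) − 1)]`,
with `Q` encoded as a probability mass function on `𝒳 × ({0,1}^K \ {0})` and variances
written as `E[·²] − (E[·])²`. -/
theorem stmt_8 (J K : ℕ) (hJ : 1 ≤ J) (hJK : J ≤ K)
    {𝒳 : Type*} [Fintype 𝒳] [DecidableEq 𝒳]
    (Q : 𝒳 → (Fin K → Bool) → ℝ)
    (hQnn : ∀ x y, 0 ≤ Q x y) (hQsum : ∑ x, ∑ y, Q x y = 1)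
    (hQ0 : ∀ x, Q x (fun _ => false) = 0)
    (q : (Fin K → Bool) → 𝒳 → ℝ)
    (hq : ∀ y x, q y x = Q x y / ∑ y', Q x y')
    (hqpos : ∀ x, 0 < ∑ y', Q x y' → ∀ z ∈ NZ J, 0 < q (extProfile J K z) x)
    (ψinv : ℝ)
    (hψinv : ψinv = ∑ x, (∑ y', Q x y') * gammaInv J K (fun y => q y x))
    (φ : 𝒳 → (Fin K → Bool) → ℝ)
    (hφ : ∀ x y, φ x y = phiU J K (fun y' => q y' x) y - ψinv) :
    (∑ x, ∑ y, Q x y * φ x y ^ 2) - (∑ x, ∑ y, Q x y * φ x y) ^ 2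
      = ((∑ x, (∑ y', Q x y') * gammaInv J K (fun y => q y x) ^ 2)
          - (∑ x, (∑ y', Q x y') * gammaInv J K (fun y => q y x)) ^ 2)
        + ∑ x, (∑ y', Q x y') *
            ((gammaInv J K (fun y => q y x) - 1) ^ 2 *
              ((∑ z ∈ NZ J, 1 / q (extProfile J K z) x) - 1)) :=
  stmt_8_general J K hJ hJK Q hQnn hQsum q hq hqpos ψinv φ hφ
end

section
/- Let J ≥ 1, let γ ∈ (0,1), let q_y > 0 for every nonzero profile y ∈ {0,1}^J \ {0}, and let δ ≥ 0. If the highest-order interaction coefficient is bounded, i.e., | ∑_{y ≠ 0} (−1)^{J + |y|} log(q_y · γ) + (−1)^J log(1 − γ) | ≤ δ, then 1 + exp(S(q) − δ) ≤ 1/γ ≤ 1 + exp(S(q) + δ), where S(q) = ∑_{y ≠ 0} (−1)^{|y|+1} log q_y. -/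
/-!
Summing `(-1)^|y|` over all profiles gives `∏ₖ (1 + (-1)) = 0`, so the nonzero profiles contribute
`-1`. Hence, after splitting `log (q_y γ) = log q_y + log γ`, the interaction term collapses to
`(-1)^J (log ((1 - γ)/γ) - S(q))`, and the bound `|α_1| ≤ δ` pins `log ((1 - γ)/γ)` to
`[S(q) - δ, S(q) + δ]`. Exponentiating and using `1/γ = 1 + (1 - γ)/γ` gives the two inequalities.
-/

open Finset

section CaptureProfiles

variable {ι : Type*} [Fintype ι]

/-- `|y|`. -/
def numOnes (y : ι → Bool) : ℕ :=
  (Finset.univ.filter (fun k => y k = true)).card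

lemma neg_one_pow_numOnes (y : ι → Bool) :
    (-1 : ℝ) ^ numOnes y = ∏ k, if y k = true then (-1 : ℝ) else 1 := by
  rw [prod_ite, prod_const, prod_const, one_pow, mul_one, numOnes]

variable [DecidableEq ι]

variable (ι) in
def nonzeroProfiles : Finset (ι → Bool) :=
  Finset.univ.filter (fun y : ι → Bool => y ≠ fun _ => false)

/-- `S(q)`. -/
noncomputable def logOddsSum (q : (ι → Bool) → ℝ) : ℝ :=
  ∑ y ∈ nonzeroProfiles ι, (-1 : ℝ) ^ (numOnes y + 1) * Real.log (q y)

lemma sum_neg_one_pow_numOnes [Nonempty ι] : ∑ y : ι → Bool, (-1 : ℝ) ^ numOnes y = 0 := by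
  simp_rw [neg_one_pow_numOnes]
  rw [← Fintype.prod_sum (fun (_ : ι) (b : Bool) => if b = true then (-1 : ℝ) else 1)]
  exact prod_eq_zero (mem_univ (Classical.arbitrary ι)) (by simp)

lemma sum_nonzeroProfiles_neg_one_pow_numOnes [Nonempty ι] :
    ∑ y ∈ nonzeroProfiles ι, (-1 : ℝ) ^ numOnes y = -1 := by
  rw [nonzeroProfiles, filter_ne', sum_erase_eq_sub (mem_univ _), sum_neg_one_pow_numOnes]
  simp [numOnes]

lemma sum_nonzeroProfiles_neg_one_pow_mul_log_mul [Nonempty ι] (n : ℕ) {q : (ι → Bool) → ℝ}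
    (hq : ∀ y ∈ nonzeroProfiles ι, q y ≠ 0) {γ : ℝ} (hγ : γ ≠ 0) :
    ∑ y ∈ nonzeroProfiles ι, (-1 : ℝ) ^ (n + numOnes y) * Real.log (q y * γ)
      = (-1 : ℝ) ^ n * (-logOddsSum q - Real.log γ) := by
  have hsplit : ∀ y ∈ nonzeroProfiles ι,
      (-1 : ℝ) ^ (n + numOnes y) * Real.log (q y * γ)
        = (-1 : ℝ) ^ n * (-((-1 : ℝ) ^ (numOnes y + 1) * Real.log (q y))
          + (-1 : ℝ) ^ numOnes y * Real.log γ) := by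
    intro y hy
    rw [Real.log_mul (hq y hy) hγ]
    ring
  rw [sum_congr rfl hsplit, ← mul_sum, sum_add_distrib, ← sum_mul, sum_neg_distrib,
    sum_nonzeroProfiles_neg_one_pow_numOnes, logOddsSum]
  ring

lemma abs_interaction_eq [Nonempty ι] (n : ℕ) {q : (ι → Bool) → ℝ}
    (hq : ∀ y ∈ nonzeroProfiles ι, q y ≠ 0) {γ : ℝ} (hγ0 : γ ≠ 0) (hγ1 : γ ≠ 1) :
    |∑ y ∈ nonzeroProfiles ι, (-1 : ℝ) ^ (n + numOnes y) * Real.log (q y * γ)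
        + (-1 : ℝ) ^ n * Real.log (1 - γ)|
      = |Real.log ((1 - γ) / γ) - logOddsSum q| := by
  rw [sum_nonzeroProfiles_neg_one_pow_mul_log_mul n hq hγ0, ← mul_add, abs_mul, abs_neg_one_pow,
    one_mul, Real.log_div (sub_ne_zero.2 hγ1.symm) hγ0]
  ring_nf

end CaptureProfiles

lemma one_add_exp_sub_le_inv_and_inv_le_one_add_exp_add {γ S δ : ℝ} (hγ0 : 0 < γ) (hγ1 : γ < 1)
    (h : |Real.log ((1 - γ) / γ) - S| ≤ δ) :
    1 + Real.exp (S - δ) ≤ 1 / γ ∧ 1 / γ ≤ 1 + Real.exp (S + δ) := by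
  have hinv : 1 / γ = 1 + Real.exp (Real.log ((1 - γ) / γ)) := by
    rw [Real.exp_log (div_pos (sub_pos.2 hγ1) hγ0)]
    field_simp
    ring
  obtain ⟨hlower, hupper⟩ := abs_le.1 h
  rw [hinv]
  constructor
  · gcongr
    linarith
  · gcongr
    linarith

theorem stmt_13_general (J : ℕ) (hJ : 1 ≤ J) (γ : ℝ) (hγ0 : 0 < γ) (hγ1 : γ < 1)
    (q : (Fin J → Bool) → ℝ)
    (hq : ∀ y : Fin J → Bool, y ≠ (fun _ => false) → 0 < q y)
    (δ : ℝ)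
    (h : |∑ y ∈ Finset.univ.filter (fun y : Fin J → Bool => y ≠ fun _ => false),
          (-1 : ℝ) ^ (J + (Finset.univ.filter (fun k => y k = true)).card)
            * Real.log (q y * γ)
        + (-1 : ℝ) ^ J * Real.log (1 - γ)| ≤ δ) :
    1 + Real.exp ((∑ y ∈ Finset.univ.filter (fun y : Fin J → Bool => y ≠ fun _ => false),
        (-1 : ℝ) ^ ((Finset.univ.filter (fun k => y k = true)).card + 1) * Real.log (q y)) - δ)
      ≤ 1 / γ ∧
    1 / γ ≤
      1 + Real.exp ((∑ y ∈ Finset.univ.filter (fun y : Fin J → Bool => y ≠ fun _ => false),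
        (-1 : ℝ) ^ ((Finset.univ.filter (fun k => y k = true)).card + 1) * Real.log (q y)) + δ) := by
  have : Nonempty (Fin J) := ⟨⟨0, hJ⟩⟩
  have hq' : ∀ y ∈ nonzeroProfiles (Fin J), q y ≠ 0 := fun y hy =>
    (hq y (mem_filter.1 hy).2).ne'
  have hα : |Real.log ((1 - γ) / γ) - logOddsSum q| ≤ δ :=
    (abs_interaction_eq J hq' hγ0.ne' hγ1.ne).symm.trans_le h
  exact one_add_exp_sub_le_inv_and_inv_le_one_add_exp_add hγ0 hγ1 hα

/-- if the highest-order interaction coefficient is bounded,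
`|∑_{y ≠ 0} (−1)^{J+|y|} log(q_y γ) + (−1)^J log(1−γ)| ≤ δ`, then
`1 + exp(S(q) − δ) ≤ 1/γ ≤ 1 + exp(S(q) + δ)` where
`S(q) = ∑_{y ≠ 0} (−1)^{|y|+1} log q_y`. -/
theorem stmt_13 (J : ℕ) (hJ : 1 ≤ J) (γ : ℝ) (hγ0 : 0 < γ) (hγ1 : γ < 1)
    (q : (Fin J → Bool) → ℝ)
    (hq : ∀ y : Fin J → Bool, y ≠ (fun _ => false) → 0 < q y)
    (δ : ℝ) (hδ : 0 ≤ δ)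
    (h : |∑ y ∈ Finset.univ.filter (fun y : Fin J → Bool => y ≠ fun _ => false),
          (-1 : ℝ) ^ (J + (Finset.univ.filter (fun k => y k = true)).card)
            * Real.log (q y * γ)
        + (-1 : ℝ) ^ J * Real.log (1 - γ)| ≤ δ) :
    1 + Real.exp ((∑ y ∈ Finset.univ.filter (fun y : Fin J → Bool => y ≠ fun _ => false),
        (-1 : ℝ) ^ ((Finset.univ.filter (fun k => y k = true)).card + 1) * Real.log (q y)) - δ)
      ≤ 1 / γ ∧
    1 / γ ≤
      1 + Real.exp ((∑ y ∈ Finset.univ.filter (fun y : Fin J → Bool => y ≠ fun _ => false),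
        (-1 : ℝ) ^ ((Finset.univ.filter (fun k => y k = true)).card + 1) * Real.log (q y)) + δ) :=
  stmt_13_general J hJ γ hγ0 hγ1 q hq δ h
end

section
/- Let A be a real-valued random variable, c ∈ ℝ, and suppose there exist β > 0 and C ≥ 0 such that P( |A − c| ≤ t ) ≤ C t^β for every t ≥ 0 (the margin condition). Let B be a real-valued random variable on the same probability space and let m ≥ 0 satisfy |A − B| ≤ m almost surely. Then E[ |A − B| · 1( |A − c| ≤ |A − B| ) ] ≤ C m^{1+β}. -/
/-!
On the event `|A - c| ≤ |A - B|` we have `|A - c| ≤ m`, so the integrand is dominated by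
`m · 1(|A - c| ≤ m)`. Integrating, and applying the margin condition at `t = m`, gives
`m · C m^β = C m^{1+β}`.
-/

open MeasureTheory

lemma abs_mul_ite_le_ite_of_abs_le {d a m : ℝ} (h : |d| ≤ m) :
    |d| * (if a ≤ |d| then (1 : ℝ) else 0) ≤ if a ≤ m then m else 0 := by
  split_ifs with had ham ham
  · simpa using h
  · exact absurd (had.trans h) ham
  · simpa using (abs_nonneg d).trans h
  · simp

theorem integral_le_measureReal_mul_of_ae_le_indicator {Ω : Type*} [MeasurableSpace Ω]
    {μ : Measure Ω} [IsFiniteMeasure μ] {f : Ω → ℝ} {s : Set Ω} {m : ℝ}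
    (hs : MeasurableSet s) (hf : 0 ≤ᵐ[μ] f) (hfs : f ≤ᵐ[μ] s.indicator fun _ => m) :
    ∫ ω, f ω ∂μ ≤ μ.real s * m :=
  calc ∫ ω, f ω ∂μ ≤ ∫ ω, s.indicator (fun _ => m) ω ∂μ :=
        integral_mono_of_nonneg hf ((integrable_const m).indicator hs) hfs
    _ = μ.real s * m := integral_indicator_const m hs

theorem stmt_16_general {Ω : Type*} [MeasurableSpace Ω] (P : Measure Ω) [IsProbabilityMeasure P]
    (A B : Ω → ℝ) (hA : Measurable A)
    (c β C : ℝ) (hβ : 0 < β)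
    (hmargin : ∀ t : ℝ, 0 ≤ t → (P {ω | |A ω - c| ≤ t}).toReal ≤ C * t ^ β)
    (m : ℝ) (hm : 0 ≤ m) (hAB : ∀ᵐ ω ∂P, |A ω - B ω| ≤ m) :
    ∫ ω, |A ω - B ω| * (if |A ω - c| ≤ |A ω - B ω| then (1 : ℝ) else 0) ∂P
      ≤ C * m ^ (1 + β) := by
  have hS : MeasurableSet {ω | |A ω - c| ≤ m} :=
    measurableSet_le (hA.sub measurable_const).abs measurable_const
  have hdom : ∀ᵐ ω ∂P, |A ω - B ω| * (if |A ω - c| ≤ |A ω - B ω| then (1 : ℝ) else 0)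
      ≤ {ω | |A ω - c| ≤ m}.indicator (fun _ => m) ω := by
    filter_upwards [hAB] with ω h
    simpa [Set.indicator_apply] using abs_mul_ite_le_ite_of_abs_le (a := |A ω - c|) h
  have hnonneg : ∀ᵐ ω ∂P,
      0 ≤ |A ω - B ω| * (if |A ω - c| ≤ |A ω - B ω| then (1 : ℝ) else 0) :=
    .of_forall fun ω => mul_nonneg (abs_nonneg _) (by split_ifs <;> norm_num)
  calc _ ≤ P.real {ω | |A ω - c| ≤ m} * m :=
        integral_le_measureReal_mul_of_ae_le_indicator hS hnonneg hdom
    _ ≤ C * m ^ β * m := mul_le_mul_of_nonneg_right (hmargin m hm) hm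
    _ = C * m ^ (1 + β) := by
        rw [Real.rpow_add' hm (by positivity), Real.rpow_one]; ring

/-- under the margin condition `P(|A − c| ≤ t) ≤ C t^β` for all `t ≥ 0`
(with `β > 0`, `C ≥ 0`), if `|A − B| ≤ m` almost surely with `m ≥ 0`, then
`E[|A − B| · 1(|A − c| ≤ |A − B|)] ≤ C m^{1+β}`. -/
theorem stmt_16 {Ω : Type*} [MeasurableSpace Ω] (P : Measure Ω) [IsProbabilityMeasure P]
    (A B : Ω → ℝ) (hA : Measurable A) (hB : Measurable B)
    (c β C : ℝ) (hβ : 0 < β) (hC : 0 ≤ C)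
    (hmargin : ∀ t : ℝ, 0 ≤ t → (P {ω | |A ω - c| ≤ t}).toReal ≤ C * t ^ β)
    (m : ℝ) (hm : 0 ≤ m) (hAB : ∀ᵐ ω ∂P, |A ω - B ω| ≤ m) :
    ∫ ω, |A ω - B ω| * (if |A ω - c| ≤ |A ω - B ω| then (1 : ℝ) else 0) ∂P
      ≤ C * m ^ (1 + β) :=
  stmt_16_general P A B hA c β C hβ hmargin m hm hAB
end

section
/- Let K ≥ 2 and let p : {0,1}^K → (0, ∞). Define α_1 := ∑_{y ∈ {0,1}^K} (−1)^{K + |y|} log p(y), where |y| is the number of ones of y, and for each c ∈ {0,1}^{K−2} define the conditional odds ratio OR(c) := p(1,1,c) p(0,0,c) / ( p(1,0,c) p(0,1,c) ), where (a,b,c) denotes the vector with first two coordinates a, b and remaining coordinates c. Then exp( (−1)^K α_1 ) = ( ∏_{y : |y| even} p(y) ) / ( ∏_{y : |y| odd} p(y) ) = ( ∏_{c : |c| even} OR(c) ) / ( ∏_{c : |c| odd} OR(c) ). -/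
/-!
Exponentiating the signed sum of logarithms gives the alternating product
`∏_y p(y)^{(-1)^{|y|}}` over the cube, which splits by parity into the first quotient.
Summing out one coordinate replaces `f` by `c ↦ f(0,c) / f(1,c)` in the alternating product;
doing this for the first two coordinates produces exactly the odds ratio `OR(c)`.
-/

open Finset

/-- The vector in `{0,1}^K` whose first two coordinates are `a, b` and whose
remaining `K − 2` coordinates are given by `c`. -/
def cat2 {K : ℕ} (hK : 2 ≤ K) (a b : Bool) (c : Fin (K - 2) → Bool) : Fin K → Bool :=
  fun i =>
    if h0 : (i : ℕ) = 0 then a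
    else if h1 : (i : ℕ) = 1 then b
    else c ⟨(i : ℕ) - 2, by have := i.isLt; omega⟩

lemma wt_cons {n : ℕ} (a : Bool) (y : Fin n → Bool) :
    wt (Fin.cons a y : Fin (n + 1) → Bool) = a.toNat + wt y := by
  simp only [wt, card_filter, Fin.sum_univ_succ, Fin.cons_zero, Fin.cons_succ]
  cases a <;> rfl

lemma cat2_eq_cons {m : ℕ} (h : 2 ≤ m + 2) (a b : Bool) (c : Fin m → Bool) :
    cat2 h a b c = Fin.cons a (Fin.cons b c : Fin (m + 1) → Bool) := by
  funext i
  refine Fin.cases rfl (fun j => Fin.cases rfl (fun k => ?_) j) i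
  simp [cat2]

section AltProd

variable {M : Type*} [DivisionCommMonoid M]

def altProd {n : ℕ} (f : (Fin n → Bool) → M) : M :=
  ∏ y, f y ^ ((-1 : ℤ) ^ wt y)

lemma prod_zpow_neg_one_pow_eq_div {ι : Type*} [Fintype ι] (w : ι → ℕ) (f : ι → M) :
    ∏ i, f i ^ ((-1 : ℤ) ^ w i) = (∏ i with Even (w i), f i) / ∏ i with Odd (w i), f i := by
  have hsign (i : ι) : f i ^ ((-1 : ℤ) ^ w i) = if Even (w i) then f i else (f i)⁻¹ := by
    rcases Nat.even_or_odd (w i) with h | h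
    · simp [h.neg_one_pow, h]
    · simp [h.neg_one_pow, Nat.not_even_iff_odd.mpr h]
  simp only [hsign, prod_ite, prod_inv_distrib, Nat.not_even_iff_odd, div_eq_mul_inv]

lemma altProd_eq_div {n : ℕ} (f : (Fin n → Bool) → M) :
    altProd f = (∏ y with Even (wt y), f y) / ∏ y with Odd (wt y), f y :=
  prod_zpow_neg_one_pow_eq_div wt f

lemma altProd_succ {n : ℕ} (f : (Fin (n + 1) → Bool) → M) :
    altProd f = altProd fun c => f (Fin.cons false c) / f (Fin.cons true c) := by
  have hsplit : altProd f =
      ∏ c, ∏ a, f (Fin.cons a c) ^ ((-1 : ℤ) ^ wt (Fin.cons a c : Fin (n + 1) → Bool)) := by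
    rw [altProd, ← Fintype.prod_equiv (Fin.consEquiv fun _ => Bool) _ _ (fun _ => rfl),
      Fintype.prod_prod_type, prod_comm]
    rfl
  rw [hsplit, altProd]
  refine Fintype.prod_congr _ _ fun c => ?_
  rw [Fintype.prod_bool, wt_cons, wt_cons, Bool.toNat_true, Bool.toNat_false, zero_add, pow_add,
    pow_one, neg_one_mul, zpow_neg, div_zpow, inv_mul_eq_div]

end AltProd

lemma exp_sum_mul_log_eq_altProd {n : ℕ} (p : (Fin n → Bool) → ℝ) (hp : ∀ y, 0 < p y) :
    Real.exp (∑ y, (-1 : ℝ) ^ wt y * Real.log (p y)) = altProd p := by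
  rw [Real.exp_sum, altProd]
  refine Fintype.prod_congr _ _ fun y => ?_
  have hsign : (-1 : ℝ) ^ wt y = (((-1 : ℤ) ^ wt y : ℤ) : ℝ) := by push_cast; rfl
  rw [hsign, ← Real.log_zpow, Real.exp_log (zpow_pos (hp y) _)]

lemma neg_one_pow_mul_neg_one_pow_add {R : Type*} [Monoid R] [HasDistribNeg R] (K n : ℕ) :
    (-1 : R) ^ K * (-1) ^ (K + n) = (-1) ^ n := by
  rw [pow_add, ← mul_assoc, ← pow_add, (Even.add_self K).neg_one_pow, one_mul]

/-- for `K ≥ 2` and positive `p : {0,1}^K → (0,∞)`, the highest-order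
interaction coefficient `α₁ = ∑_y (−1)^{K+|y|} log p(y)` satisfies
`exp((−1)^K α₁) = (∏_{|y| even} p(y))/(∏_{|y| odd} p(y))
              = (∏_{|c| even} OR(c))/(∏_{|c| odd} OR(c))`,
where `OR(c) = p(1,1,c)p(0,0,c)/(p(1,0,c)p(0,1,c))`. -/
theorem stmt_19 (K : ℕ) (hK : 2 ≤ K) (p : (Fin K → Bool) → ℝ) (hp : ∀ y, 0 < p y)
    (α₁ : ℝ) (hα₁ : α₁ = ∑ y : Fin K → Bool, (-1 : ℝ) ^ (K + wt y) * Real.log (p y))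
    (OR : (Fin (K - 2) → Bool) → ℝ)
    (hOR : ∀ c, OR c = p (cat2 hK true true c) * p (cat2 hK false false c)
      / (p (cat2 hK true false c) * p (cat2 hK false true c))) :
    Real.exp ((-1 : ℝ) ^ K * α₁)
        = (∏ y ∈ Finset.univ.filter (fun y : Fin K → Bool => Even (wt y)), p y)
          / (∏ y ∈ Finset.univ.filter (fun y : Fin K → Bool => Odd (wt y)), p y) ∧
    Real.exp ((-1 : ℝ) ^ K * α₁)
        = (∏ c ∈ Finset.univ.filter (fun c : Fin (K - 2) → Bool => Even (wt c)), OR c)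
          / (∏ c ∈ Finset.univ.filter (fun c : Fin (K - 2) → Bool => Odd (wt c)), OR c) := by
  have hexp : Real.exp ((-1 : ℝ) ^ K * α₁) = altProd p := by
    simp only [hα₁, mul_sum, ← mul_assoc, neg_one_pow_mul_neg_one_pow_add]
    exact exp_sum_mul_log_eq_altProd p hp
  refine ⟨hexp.trans (altProd_eq_div p), hexp.trans ?_⟩
  obtain ⟨m, rfl⟩ : ∃ m, K = m + 2 := ⟨K - 2, by omega⟩
  have hOR' : OR = fun c =>
      p (Fin.cons false (Fin.cons false c)) / p (Fin.cons true (Fin.cons false c))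
        / (p (Fin.cons false (Fin.cons true c)) / p (Fin.cons true (Fin.cons true c))) := by
    funext c
    simp only [hOR, cat2_eq_cons, div_div_div_eq, mul_comm]
  rw [altProd_succ, altProd_succ, ← hOR']
  exact altProd_eq_div OR
end
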